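/- Let o ∈ [0,1]^d, z its rounding, p ≥ 1, and let S, T ⊆ {1,…,d} with |S| = |T| and suppose there is a bijection φ: S → T with |o^{φ(i)} − 0.5| ≤ |o^i − 0.5| for all i ∈ S. Then ‖o − flip(z,T)‖_p ≤ ‖o − flip(z,S)‖_p. -/

import Mathlib

noncomputable def lpN {d : ℕ} (p : ℝ) (v : Fin d → ℝ) : ℝ :=
  (∑ k, |v k| ^ p) ^ (1 / p)

noncomputable def rnd {d : ℕ} (o : Fin d → ℝ) : Fin d → ℝ :=
  fun k => if (0.5 : ℝ) ≤ o k then 1 else 0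

noncomputable def flipSet {d : ℕ} (z : Fin d → ℝ) (S : Finset (Fin d)) : Fin d → ℝ :=
  fun k => if k ∈ S then 1 - z k else z k

/-!
With certainty `c k = |o k - 0.5| ∈ [0, 0.5]`, coordinate `k` contributes `(0.5 + c k) ^ p` to
`‖o - flip(z, U)‖_p ^ p` if it is flipped and `(0.5 - c k) ^ p` otherwise. Hence that sum is a
constant plus `∑ k ∈ U, flipCost p (c k)`, where `flipCost p` is monotone on `[0, 0.5]`;
reindexing the sum over `T` along `φ` compares it termwise with the sum over `S`.
-/

open Finset

noncomputable def flipCost (p c : ℝ) : ℝ :=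
  (0.5 + c) ^ p - (0.5 - c) ^ p

theorem flipCost_le_flipCost {p c c' : ℝ} (hp : 0 ≤ p) (hc : 0 ≤ c) (hc' : c' ≤ 0.5)
    (hcc' : c ≤ c') : flipCost p c ≤ flipCost p c' := by
  have hplus : (0.5 + c) ^ p ≤ (0.5 + c') ^ p := by gcongr
  have hminus : (0.5 - c') ^ p ≤ (0.5 - c) ^ p := by gcongr
  unfold flipCost
  linarith

theorem abs_sub_rnd {d : ℕ} {o : Fin d → ℝ} {k : Fin d} (hk : o k ∈ Set.Icc (0 : ℝ) 1) :
    |o k - rnd o k| = 0.5 - |o k - 0.5| := by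
  obtain ⟨h0, h1⟩ := hk
  unfold rnd
  split_ifs with h
  · rw [abs_of_nonpos (by linarith), abs_of_nonneg (by linarith)]; ring
  · rw [abs_of_nonneg (by linarith), abs_of_nonpos (by linarith)]; ring

theorem abs_sub_one_sub_rnd {d : ℕ} {o : Fin d → ℝ} {k : Fin d}
    (hk : o k ∈ Set.Icc (0 : ℝ) 1) :
    |o k - (1 - rnd o k)| = 0.5 + |o k - 0.5| := by
  obtain ⟨h0, h1⟩ := hk
  unfold rnd
  split_ifs with h
  · rw [abs_of_nonneg (by linarith), abs_of_nonneg (by linarith)]; ring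
  · rw [abs_of_nonpos (by linarith), abs_of_nonpos (by linarith)]; ring

theorem abs_sub_half_le_half {x : ℝ} (hx : x ∈ Set.Icc (0 : ℝ) 1) : |x - 0.5| ≤ 0.5 := by
  obtain ⟨h0, h1⟩ := hx
  rw [abs_le]
  constructor <;> linarith

theorem sum_abs_sub_flipSet_rnd_rpow {d : ℕ} (p : ℝ) {o : Fin d → ℝ}
    (ho : ∀ k, o k ∈ Set.Icc (0 : ℝ) 1) (U : Finset (Fin d)) :
    ∑ k, |o k - flipSet (rnd o) U k| ^ p =
      ∑ k, (0.5 - |o k - 0.5|) ^ p + ∑ k ∈ U, flipCost p |o k - 0.5| := by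
  have hterm : ∀ k, |o k - flipSet (rnd o) U k| ^ p =
      (0.5 - |o k - 0.5|) ^ p + if k ∈ U then flipCost p |o k - 0.5| else 0 := by
    intro k
    unfold flipSet
    split_ifs
    · rw [abs_sub_one_sub_rnd (ho k), flipCost]; ring
    · rw [abs_sub_rnd (ho k), add_zero]
  simp_rw [hterm, sum_add_distrib, sum_ite_mem, univ_inter]

theorem sum_le_sum_of_bijOn {ι M : Type*} [AddCommMonoid M] [PartialOrder M]
    [IsOrderedAddMonoid M] {S T : Finset ι} {φ : ι → ι} (hφ : Set.BijOn φ S T) {f : ι → M}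
    (hf : ∀ i ∈ S, f (φ i) ≤ f i) : ∑ k ∈ T, f k ≤ ∑ k ∈ S, f k := by
  rw [← sum_nbij φ hφ.mapsTo hφ.injOn hφ.surjOn (fun _ _ => rfl)]
  exact sum_le_sum hf

theorem lpN_le_lpN {d : ℕ} {p : ℝ} (hp : 0 ≤ p) {v w : Fin d → ℝ}
    (h : ∑ k, |v k| ^ p ≤ ∑ k, |w k| ^ p) : lpN p v ≤ lpN p w := by
  unfold lpN
  gcongr

theorem stmt8_general {d : ℕ} (p : ℝ) (hp : 1 ≤ p)
    (o : Fin d → ℝ) (ho : ∀ k, o k ∈ Set.Icc (0 : ℝ) 1)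
    (S T : Finset (Fin d))
    (φ : Fin d → Fin d) (hφ : Set.BijOn φ ↑S ↑T)
    (hle : ∀ i ∈ S, |o (φ i) - 0.5| ≤ |o i - 0.5|) :
    lpN p (fun k => o k - flipSet (rnd o) T k) ≤
      lpN p (fun k => o k - flipSet (rnd o) S k) := by
  have hp0 : 0 ≤ p := by linarith
  have hcost : ∑ k ∈ T, flipCost p |o k - 0.5| ≤ ∑ k ∈ S, flipCost p |o k - 0.5| :=
    sum_le_sum_of_bijOn hφ fun i hi =>
      flipCost_le_flipCost hp0 (abs_nonneg _) (abs_sub_half_le_half (ho i)) (hle i hi)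
  apply lpN_le_lpN hp0
  rw [sum_abs_sub_flipSet_rnd_rpow p ho S, sum_abs_sub_flipSet_rnd_rpow p ho T]
  linarith

theorem stmt8 {d : ℕ} (hd : 1 ≤ d) (p : ℝ) (hp : 1 ≤ p)
    (o : Fin d → ℝ) (ho : ∀ k, o k ∈ Set.Icc (0 : ℝ) 1)
    (S T : Finset (Fin d)) (hcard : S.card = T.card)
    (φ : Fin d → Fin d) (hφ : Set.BijOn φ ↑S ↑T)
    (hle : ∀ i ∈ S, |o (φ i) - 0.5| ≤ |o i - 0.5|) :
    lpN p (fun k => o k - flipSet (rnd o) T k) ≤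
      lpN p (fun k => o k - flipSet (rnd o) S k) :=
  stmt8_general p hp o ho S T φ hφ hle
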